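/- arXiv:2202.02322 — 2 statements merged into one kernel-verified Lean document; each statement's English description precedes it below -/
import Mathlib

section
/- Let G be a finite group and p a prime divisor of the order of G. If every maximal subgroup of G is normal in G or has p'-order, then for every prime divisor q of the order of G, G is either q-nilpotent or q-closed. -/
/-!
The maximal subgroups containing a Sylow `p`-subgroup `P` have order divisible by `p`, hence are
normal, and the Frattini argument then forces `P` to be normal. Every maximal subgroup of `G ⧸ P`
pulls back to one containing `P`, so all maximal subgroups of `G ⧸ P` are normal and `G ⧸ P` is
nilpotent. For `q = p` the group is `q`-closed; for `q ≠ p` the normal `q`-complement of the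
nilpotent group `G ⧸ P` pulls back to one of `G`, because `P` is a `q'`-group.
-/

open Subgroup

def IsPNilpotent (q : ℕ) (G : Type*) [Group G] : Prop :=
  ∃ N : Subgroup G, N.Normal ∧ ¬ q ∣ Nat.card N ∧ ∃ n : ℕ, N.index = q ^ n

section

variable {G : Type*} [Group G] [Finite G] {p q : ℕ}

theorem IsPGroup.not_dvd_card_of_ne [Fact p.Prime] (hq : q.Prime) (hqp : q ≠ p)
    {H : Type*} [Group H] [Finite H] (hH : IsPGroup p H) : ¬ q ∣ Nat.card H := by
  obtain ⟨n, hn⟩ := IsPGroup.iff_card.mp hH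
  rw [hn]
  exact fun hdvd => hqp ((Nat.prime_dvd_prime_iff_eq hq Fact.out).mp (hq.dvd_of_dvd_pow hdvd))

theorem Sylow.normal_of_forall_isCoatom_le_normal [Fact p.Prime] (P : Sylow p G)
    (h : ∀ M : Subgroup G, IsCoatom M → (P : Subgroup G) ≤ M → M.Normal) :
    (P : Subgroup G).Normal := by
  refine normalizer_eq_top_iff.mp ?_
  rcases eq_top_or_exists_le_coatom (normalizer (P : Set G)) with htop | ⟨M, hM, hNM⟩
  · exact htop
  · have hPM : (P : Subgroup G) ≤ M := le_normalizer.trans hNM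
    have : M.Normal := h M hM hPM
    exact (hM.1 (by rw [← sup_of_le_right hNM, P.normalizer_sup_eq_top' hPM])).elim

theorem isNilpotent_quotient_of_forall_isCoatom_le_normal {N : Subgroup G} [N.Normal]
    (h : ∀ M : Subgroup G, IsCoatom M → N ≤ M → M.Normal) :
    Group.IsNilpotent (G ⧸ N) := by
  refine (Group.isNilpotent_of_finite_tfae.out 0 2).mpr fun M hM => ?_
  have hsurj := QuotientGroup.mk'_surjective N
  have hcomap := h _ (isCoatom_comap_of_surjective hsurj hM) (QuotientGroup.le_comap_mk' N M)
  simpa only [map_comap_eq_self_of_surjective hsurj] using hcomap.map _ hsurj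

theorem Sylow.isPNilpotent_of_surjective [Fact q.Prime] (Q : Sylow q G) {f : G →* Q}
    (hf : Function.Surjective f) : IsPNilpotent q G := by
  have hindex : f.ker.index = Nat.card Q := by
    rw [index_ker, f.range_eq_top.mpr hf, card_top]
  refine ⟨f.ker, inferInstance, ?_, ?_⟩
  · have hcard : Nat.card f.ker = (Q : Subgroup G).index := by
      apply Nat.eq_of_mul_eq_mul_left (Nat.card_pos (α := Q))
      rw [← hindex, mul_comm, card_mul_index, hindex, card_mul_index]
    exact hcard ▸ Q.not_dvd_index
  · rw [hindex]
    exact IsPGroup.iff_card.mp Q.isPGroup'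

theorem Group.IsNilpotent.isPNilpotent [Group.IsNilpotent G] (hq : q.Prime) : IsPNilpotent q G := by
  have : Fact q.Prime := ⟨hq⟩
  by_cases hqG : q ∣ Nat.card G
  · have hmem : q ∈ (Nat.card G).primeFactors :=
      Nat.mem_primeFactors.mpr ⟨hq, hqG, Nat.card_pos.ne'⟩
    let e := Sylow.directProductOfNormal (G := G) fun P => inferInstance
    let Q : Sylow q G := default
    let f : G →* Q := (Pi.evalMonoidHom (fun P : Sylow q G => (P : Subgroup G)) Q).comp
      ((Pi.evalMonoidHom _ (⟨q, hmem⟩ : (Nat.card G).primeFactors)).comp e.symm.toMonoidHom)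
    have hf : Function.Surjective f :=
      ((Function.surjective_eval (β := fun P : Sylow q G => (P : Subgroup G)) Q).comp
        (Function.surjective_eval (β := fun p : (Nat.card G).primeFactors =>
          ∀ P : Sylow p G, (P : Subgroup G)) ⟨q, hmem⟩)).comp e.symm.surjective
    exact Q.isPNilpotent_of_surjective hf
  · exact ⟨⊤, inferInstance, by rwa [card_top], 0, by rw [pow_zero, index_top]⟩

theorem IsPNilpotent.of_quotient (hq : q.Prime) {N : Subgroup G} [N.Normal]
    (hN : ¬ q ∣ Nat.card N)
    (h : IsPNilpotent q (G ⧸ N)) : IsPNilpotent q G := by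
  obtain ⟨K, hK, hKq, n, hKn⟩ := h
  have hsurj := QuotientGroup.mk'_surjective N
  have hindex : (K.comap (QuotientGroup.mk' N)).index = K.index := index_comap_of_surjective K hsurj
  have hcard : Nat.card (K.comap (QuotientGroup.mk' N)) = Nat.card N * Nat.card K := by
    apply Nat.eq_of_mul_eq_mul_right (Nat.pos_of_ne_zero (index_ne_zero_of_finite (H := K)))
    rw [mul_assoc, card_mul_index, ← hindex, card_mul_index,
      card_eq_card_quotient_mul_card_subgroup N, mul_comm]
  refine ⟨K.comap (QuotientGroup.mk' N), hK.comap _, ?_, n, hindex.trans hKn⟩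
  rw [hcard]
  exact fun hdvd => (hq.dvd_mul.mp hdvd).elim hN hKq

end

/-- Theorem 1.10: If every maximal subgroup of a finite group `G` is normal or
has `p'`-order (for a fixed prime divisor `p` of `|G|`), then `G` is `q`-nilpotent
or `q`-closed for every prime divisor `q` of `|G|`. -/
theorem q_nilpotent_or_q_closed_of_maximal_normal_or_p'_order
    {G : Type*} [Group G] [Finite G] (p : ℕ) (hp : p.Prime)
    (hpG : p ∣ Nat.card G)
    (h : ∀ M : Subgroup G, IsCoatom M → M.Normal ∨ ¬ p ∣ Nat.card M) :
    ∀ q : ℕ, q.Prime → q ∣ Nat.card G →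
      (∃ N : Subgroup G, N.Normal ∧ ¬ q ∣ Nat.card N ∧ ∃ n : ℕ, N.index = q ^ n) ∨
        (∃ P : Sylow q G, (P : Subgroup G).Normal) := by
  have : Fact p.Prime := ⟨hp⟩
  let P : Sylow p G := default
  have hmax : ∀ M : Subgroup G, IsCoatom M → (P : Subgroup G) ≤ M → M.Normal :=
    fun M hM hPM => (h M hM).resolve_right fun hpM =>
      hpM ((P.dvd_card_of_dvd_card hpG).trans (card_dvd_of_le hPM))
  have hP : (P : Subgroup G).Normal := P.normal_of_forall_isCoatom_le_normal hmax
  intro q hq _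
  rcases eq_or_ne q p with rfl | hqp
  · exact Or.inr ⟨P, hP⟩
  · have : Group.IsNilpotent (G ⧸ (P : Subgroup G)) :=
      isNilpotent_quotient_of_forall_isCoatom_le_normal hmax
    exact Or.inl ((Group.IsNilpotent.isPNilpotent hq).of_quotient hq
      (P.isPGroup'.not_dvd_card_of_ne hq hqp))
end

section
/- Let G be a finite group, p a prime, and N a normal subgroup of G. If every maximal subgroup of G is nilpotent or is normal in G or has p'-order, then every maximal subgroup of the quotient group G/N is nilpotent or is normal in G/N or has p'-order. -/
/-! A maximal subgroup `M` of `G ⧸ N` pulls back to a maximal subgroup `M'` of `G` mapping onto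
`M`, so `M` is a quotient of `M'`: nilpotency, normality and `p'`-order all pass from `M'`
to `M`. -/

namespace Subgroup

variable {G H : Type*} [Group G] [Group H] {f : G →* H}

theorem isNilpotent_of_isNilpotent_comap (hf : Function.Surjective f) {M : Subgroup H}
    [Group.IsNilpotent (M.comap f)] : Group.IsNilpotent M :=
  map_comap_eq_self_of_surjective hf M ▸
    Group.nilpotent_of_surjective _ (f.subgroupMap_surjective (M.comap f))

theorem card_dvd_card_comap (hf : Function.Surjective f) (M : Subgroup H) :
    Nat.card M ∣ Nat.card (M.comap f) := by
  have := card_dvd_of_surjective _ (f.subgroupMap_surjective (M.comap f))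
  rwa [map_comap_eq_self_of_surjective hf] at this

theorem isNilpotent_or_normal_or_not_dvd_card_of_comap (hf : Function.Surjective f) (p : ℕ)
    {M : Subgroup H}
    (hM : Group.IsNilpotent (M.comap f) ∨ (M.comap f).Normal ∨ ¬ p ∣ Nat.card (M.comap f)) :
    Group.IsNilpotent M ∨ M.Normal ∨ ¬ p ∣ Nat.card M := by
  rcases hM with hnil | hnormal | hcard
  · exact .inl (isNilpotent_of_isNilpotent_comap hf)
  · exact .inr (.inl ((normal_comap_iff_of_surjective hf).mp hnormal))
  · exact .inr (.inr fun hdvd ↦ hcard (hdvd.trans (card_dvd_card_comap hf M)))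

end Subgroup

theorem quotient_inherits_maximal_nilpotent_or_normal_or_p'_order_general
    {G : Type*} [Group G] (p : ℕ)
    (N : Subgroup G) [N.Normal]
    (h : ∀ M : Subgroup G, IsCoatom M →
      Group.IsNilpotent ↥M ∨ M.Normal ∨ ¬ p ∣ Nat.card M) :
    ∀ M : Subgroup (G ⧸ N), IsCoatom M →
      Group.IsNilpotent ↥M ∨ M.Normal ∨ ¬ p ∣ Nat.card M := by
  intro M hM
  have hsurj := QuotientGroup.mk'_surjective N
  exact Subgroup.isNilpotent_or_normal_or_not_dvd_card_of_comap hsurj p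
    (h _ (Subgroup.isCoatom_comap_of_surjective hsurj hM))

/-- The hypothesis "every maximal subgroup is nilpotent or normal or has
`p'`-order" is inherited by quotient groups. -/
theorem quotient_inherits_maximal_nilpotent_or_normal_or_p'_order
    {G : Type*} [Group G] [Finite G] (p : ℕ) (hp : p.Prime)
    (N : Subgroup G) [N.Normal]
    (h : ∀ M : Subgroup G, IsCoatom M →
      Group.IsNilpotent ↥M ∨ M.Normal ∨ ¬ p ∣ Nat.card M) :
    ∀ M : Subgroup (G ⧸ N), IsCoatom M →
      Group.IsNilpotent ↥M ∨ M.Normal ∨ ¬ p ∣ Nat.card M :=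
  quotient_inherits_maximal_nilpotent_or_normal_or_p'_order_general p N h
end
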